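/- arXiv:1806.07831 — 5 statements merged into one kernel-verified Lean document; each statement's English description precedes it below -/
import Mathlib

section
/- Let I, J, K ∈ End(V) be a quaternionic triple and S = {aI + bJ + cK : a² + b² + c² = 1} the associated twistor sphere. If I₁, I₂ ∈ S are non-proportional (I₁ ≠ ±I₂), and S' = {a'I' + b'J' + c'K' : a'² + b'² + c'² = 1} is another twistor sphere (for a quaternionic triple I', J', K') containing both I₁ and I₂, then S' = S. -/
/-- The twistor sphere associated to a quaternionic triple `(I, J, K)`:
the set of unit-norm real linear combinations `a • I + b • J + c • K`. -/
def twistorSphere {V : Type*} [AddCommGroup V] [Module ℝ V]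
    (I J K : Module.End ℝ V) : Set (Module.End ℝ V) :=
  {L | ∃ a b c : ℝ, a ^ 2 + b ^ 2 + c ^ 2 = 1 ∧ L = a • I + b • J + c • K}

set_option maxHeartbeats 1000000

section aux
variable {V : Type*} [AddCommGroup V] [Module ℝ V]

lemma quat_mul_expand (I J K : Module.End ℝ V) (hI : I * I = -1) (hJ : J * J = -1)
    (hK : K * K = -1) (hIJ : I * J = -(J * I)) (hIJK : I * J = K) (a b c x y z : ℝ) :
    (a • I + b • J + c • K) * (x • I + y • J + z • K)
      = (-(a*x+b*y+c*z)) • (1 : Module.End ℝ V)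
        + (b*z-c*y) • I + (c*x-a*z) • J + (a*y-b*x) • K := by
  have hJI : J * I = -K := by
    have h := hIJ.symm.trans hIJK
    rwa [neg_eq_iff_eq_neg] at h
  have hIK : I * K = -J := by rw [← hIJK, ← mul_assoc, hI, neg_one_mul]
  have hKI : K * I = J := by rw [← hIJK, mul_assoc, hJI, mul_neg, hIK, neg_neg]
  have hKJ : K * J = -I := by rw [← hIJK, mul_assoc, hJ, mul_neg_one]
  have hJK : J * K = I := by rw [← hIJK, ← mul_assoc, hJI, neg_mul, hKJ, neg_neg]
  simp only [add_mul, mul_add, smul_mul_assoc, mul_smul_comm, hI, hJ, hK, hIJK, hJI, hIK, hKI,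
    hJK, hKJ]
  module

lemma quat_memS (I J K : Module.End ℝ V) (u v w : ℝ) :
    u • I + v • J + w • K ∈ Submodule.span ℝ (Set.range ![I, J, K]) := by
  refine Submodule.add_mem _ (Submodule.add_mem _ ?_ ?_) ?_ <;>
    refine Submodule.smul_mem _ _ (Submodule.subset_span ?_)
  · exact ⟨0, rfl⟩
  · exact ⟨1, rfl⟩
  · exact ⟨2, rfl⟩

lemma twistorSphere_eq_span (I J K : Module.End ℝ V) (hI : I * I = -1) (hJ : J * J = -1)
    (hK : K * K = -1) (hIJ : I * J = -(J * I)) (hIJK : I * J = K)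
    (hone : (1 : Module.End ℝ V) ≠ 0) :
    twistorSphere I J K
      = {L | L ∈ Submodule.span ℝ (Set.range ![I, J, K]) ∧ L * L = -1} := by
  ext L
  constructor
  · rintro ⟨a, b, c, hn, rfl⟩
    refine ⟨quat_memS I J K a b c, ?_⟩
    rw [quat_mul_expand I J K hI hJ hK hIJ hIJK,
      show b*c - c*b = (0:ℝ) by ring, show c*a - a*c = (0:ℝ) by ring,
      show a*b - b*a = (0:ℝ) by ring, show a*a+b*b+c*c = (1:ℝ) by linear_combination hn]
    simp
  · rintro ⟨hmem, hsq⟩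
    rw [Submodule.mem_span_range_iff_exists_fun] at hmem
    obtain ⟨f, hf⟩ := hmem
    have hf' : L = f 0 • I + f 1 • J + f 2 • K := by
      rw [← hf, Fin.sum_univ_three]; rfl
    refine ⟨f 0, f 1, f 2, ?_, hf'⟩
    rw [hf', quat_mul_expand I J K hI hJ hK hIJ hIJK] at hsq
    rw [show f 1 * f 2 - f 2 * f 1 = (0:ℝ) by ring, show f 2 * f 0 - f 0 * f 2 = (0:ℝ) by ring,
      show f 0 * f 1 - f 1 * f 0 = (0:ℝ) by ring] at hsq
    simp only [zero_smul, add_zero] at hsq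
    have h0 : (f 0 * f 0 + f 1 * f 1 + f 2 * f 2 - 1) • (1 : Module.End ℝ V) = 0 := by
      have h1 : (-1 : Module.End ℝ V) = (-1 : ℝ) • 1 := by simp
      rw [h1] at hsq
      rw [sub_smul, one_smul]
      linear_combination (norm := module) -hsq
    rcases smul_eq_zero.mp h0 with h | h
    · nlinarith [h]
    · exact absurd h hone

lemma indep_tail {W X Y Z : Module.End ℝ V}
    (h : LinearIndependent ℝ ![W, X, Y, Z]) : LinearIndependent ℝ ![X, Y, Z] := by
  have h2 := h.comp Fin.succ (Fin.succ_injective _)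
  have heq : ![W, X, Y, Z] ∘ Fin.succ = ![X, Y, Z] := by
    funext i; fin_cases i <;> rfl
  rwa [heq] at h2

end aux


theorem stmt_4 (V : Type*) [AddCommGroup V] [Module ℝ V]
    (I J K : Module.End ℝ V) (hI : I * I = -1) (hJ : J * J = -1) (hK : K * K = -1)
    (hIJ : I * J = -(J * I)) (hIJK : I * J = K)
    (hindep : LinearIndependent ℝ ![(1 : Module.End ℝ V), I, J, K])
    (I' J' K' : Module.End ℝ V) (hI' : I' * I' = -1) (hJ' : J' * J' = -1) (hK' : K' * K' = -1)
    (hIJ' : I' * J' = -(J' * I')) (hIJK' : I' * J' = K')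
    (hindep' : LinearIndependent ℝ ![(1 : Module.End ℝ V), I', J', K'])
    (I₁ I₂ : Module.End ℝ V)
    (h₁ : I₁ ∈ twistorSphere I J K) (h₂ : I₂ ∈ twistorSphere I J K)
    (h₁' : I₁ ∈ twistorSphere I' J' K') (h₂' : I₂ ∈ twistorSphere I' J' K')
    (hne : I₁ ≠ I₂) (hne' : I₁ ≠ -I₂) :
    twistorSphere I' J' K' = twistorSphere I J K := by
  have hone : (1 : Module.End ℝ V) ≠ 0 := by
    have := hindep.ne_zero 0
    simpa using this
  have h3 : LinearIndependent ℝ ![I, J, K] := indep_tail hindep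
  have h3' : LinearIndependent ℝ ![I', J', K'] := indep_tail hindep'
  obtain ⟨a, b, c, hn, hL1⟩ := h₁
  obtain ⟨x, y, z, hn2, hL2⟩ := h₂
  obtain ⟨a', b', c', hn', hL1'⟩ := h₁'
  obtain ⟨x', y', z', hn2', hL2'⟩ := h₂'
  obtain ⟨S, hSdef⟩ : ∃ S : Submodule ℝ (Module.End ℝ V),
      S = Submodule.span ℝ (Set.range ![I, J, K]) := ⟨_, rfl⟩
  obtain ⟨S', hS'def⟩ : ∃ S' : Submodule ℝ (Module.End ℝ V),
      S' = Submodule.span ℝ (Set.range ![I', J', K']) := ⟨_, rfl⟩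
  obtain ⟨M, hMdef⟩ : ∃ M : Module.End ℝ V, M = I₁ * I₂ - I₂ * I₁ := ⟨_, rfl⟩
  have hM : M = (2*(b*z-c*y)) • I + (2*(c*x-a*z)) • J + (2*(a*y-b*x)) • K := by
    rw [hMdef, hL1, hL2, quat_mul_expand I J K hI hJ hK hIJ hIJK,
      quat_mul_expand I J K hI hJ hK hIJ hIJK]
    module
  have hM' : M = (2*(b'*z'-c'*y')) • I' + (2*(c'*x'-a'*z')) • J' + (2*(a'*y'-b'*x')) • K' := by
    rw [hMdef, hL1', hL2', quat_mul_expand I' J' K' hI' hJ' hK' hIJ' hIJK',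
      quat_mul_expand I' J' K' hI' hJ' hK' hIJ' hIJK']
    module
  -- the cross product is nonzero
  have hcross : ¬ (b*z-c*y = 0 ∧ c*x-a*z = 0 ∧ a*y-b*x = 0) := by
    rintro ⟨hp, hq, hr⟩
    have hx : x = (a*x+b*y+c*z)*a := by linear_combination (-b)*hr + c*hq + (-x)*hn
    have hy : y = (a*x+b*y+c*z)*b := by linear_combination a*hr + (-c)*hp + (-y)*hn
    have hz : z = (a*x+b*y+c*z)*c := by linear_combination (-a)*hq + b*hp + (-z)*hn
    have ht2 : (a*x+b*y+c*z)^2 = 1 := by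
      linear_combination (-(x + (a*x+b*y+c*z)*a))*hx + (-(y + (a*x+b*y+c*z)*b))*hy
        + (-(z + (a*x+b*y+c*z)*c))*hz + hn2 - (a*x+b*y+c*z)^2 * hn
    have hI2 : I₂ = (a*x+b*y+c*z) • I₁ := by
      rw [hL2, hL1]
      match_scalars
      · linear_combination hx
      · linear_combination hy
      · linear_combination hz
    have hfac : ((a*x+b*y+c*z) - 1) * ((a*x+b*y+c*z) + 1) = 0 := by linear_combination ht2
    rcases mul_eq_zero.mp hfac with h | h
    · have ht1 : a*x+b*y+c*z = 1 := by linarith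
      rw [ht1, one_smul] at hI2
      exact hne hI2.symm
    · have ht1 : a*x+b*y+c*z = -1 := by linarith
      rw [ht1] at hI2
      apply hne'
      rw [hI2]; module
  have hs : (b*z-c*y)^2 + (c*x-a*z)^2 + (a*y-b*x)^2 ≠ 0 := by
    intro h
    refine hcross ⟨?_, ?_, ?_⟩ <;>
      nlinarith [sq_nonneg (b*z-c*y), sq_nonneg (c*x-a*z), sq_nonneg (a*y-b*x)]
  -- linear independence of I₁, I₂, M
  have hv : LinearIndependent ℝ ![I₁, I₂, M] := by
    rw [Fintype.linearIndependent_iff]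
    intro g hg
    rw [Fin.sum_univ_three] at hg
    have hg' : (g 0 * a + g 1 * x + g 2 * (2*(b*z-c*y))) • I
        + (g 0 * b + g 1 * y + g 2 * (2*(c*x-a*z))) • J
        + (g 0 * c + g 1 * z + g 2 * (2*(a*y-b*x))) • K = 0 := by
      rw [← hg]
      show _ = g 0 • ![I₁, I₂, M] 0 + g 1 • ![I₁, I₂, M] 1 + g 2 • ![I₁, I₂, M] 2
      simp only [Matrix.cons_val_zero, Matrix.cons_val_one, Matrix.head_cons,
        Matrix.cons_val_two, Matrix.tail_cons]
      rw [hL1, hL2, hM]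
      module
    have hcoef := Fintype.linearIndependent_iff.mp h3
      ![g 0 * a + g 1 * x + g 2 * (2*(b*z-c*y)),
        g 0 * b + g 1 * y + g 2 * (2*(c*x-a*z)),
        g 0 * c + g 1 * z + g 2 * (2*(a*y-b*x))]
      (by rw [Fin.sum_univ_three]; exact hg')
    have E1 := hcoef 0
    have E2 := hcoef 1
    have E3 := hcoef 2
    simp only [Matrix.cons_val_zero, Matrix.cons_val_one, Matrix.head_cons,
      Matrix.cons_val_two, Matrix.tail_cons] at E1 E2 E3
    have hg2 : g 2 = 0 := by
      have h5 : 2 * g 2 * ((b*z-c*y)^2 + (c*x-a*z)^2 + (a*y-b*x)^2) = 0 := by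
        linear_combination (b*z-c*y)*E1 + (c*x-a*z)*E2 + (a*y-b*x)*E3
      rcases mul_eq_zero.mp h5 with h | h
      · rcases mul_eq_zero.mp h with h | h
        · norm_num at h
        · exact h
      · exact absurd h hs
    have F1 : g 0 + g 1 * (a*x+b*y+c*z) = 0 := by
      linear_combination a*E1 + b*E2 + c*E3 - g 0 * hn
    have F2 : g 0 * (a*x+b*y+c*z) + g 1 = 0 := by
      linear_combination x*E1 + y*E2 + z*E3 - g 1 * hn2
    have hg1 : g 1 = 0 := by
      have h6 : g 1 * ((b*z-c*y)^2 + (c*x-a*z)^2 + (a*y-b*x)^2) = 0 := by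
        linear_combination F2 - (a*x+b*y+c*z)*F1 + g 1*(a^2+b^2+c^2)*hn2 + g 1*hn
      rcases mul_eq_zero.mp h6 with h | h
      · exact h
      · exact absurd h hs
    have hg0 : g 0 = 0 := by
      have := F1; rw [hg1] at this; linarith
    intro i; fin_cases i
    · exact hg0
    · exact hg1
    · exact hg2
  -- span arguments
  haveI : FiniteDimensional ℝ S := hSdef ▸ FiniteDimensional.span_of_finite ℝ (Set.finite_range _)
  haveI : FiniteDimensional ℝ S' := hS'def ▸ FiniteDimensional.span_of_finite ℝ (Set.finite_range _)
  obtain ⟨T, hTdef⟩ : ∃ T : Submodule ℝ (Module.End ℝ V),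
      T = Submodule.span ℝ (Set.range ![I₁, I₂, M]) := ⟨_, rfl⟩
  have hTS : T ≤ S := by
    rw [hTdef, hSdef, Submodule.span_le]
    rintro _ ⟨i, rfl⟩
    fin_cases i
    · show I₁ ∈ _; rw [hL1]; exact quat_memS I J K a b c
    · show I₂ ∈ _; rw [hL2]; exact quat_memS I J K x y z
    · show M ∈ _; rw [hM]; exact quat_memS I J K _ _ _
  have hTS' : T ≤ S' := by
    rw [hTdef, hS'def, Submodule.span_le]
    rintro _ ⟨i, rfl⟩
    fin_cases i
    · show I₁ ∈ _; rw [hL1']; exact quat_memS I' J' K' a' b' c'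
    · show I₂ ∈ _; rw [hL2']; exact quat_memS I' J' K' x' y' z'
    · show M ∈ _; rw [hM']; exact quat_memS I' J' K' _ _ _
  have hrT : Module.finrank ℝ T = 3 := by
    rw [hTdef, finrank_span_eq_card hv]; simp
  have hrS : Module.finrank ℝ S = 3 := by
    rw [hSdef, finrank_span_eq_card h3]; simp
  have hrS' : Module.finrank ℝ S' = 3 := by
    rw [hS'def, finrank_span_eq_card h3']; simp
  have hTSeq : T = S := Submodule.eq_of_le_of_finrank_eq hTS (by rw [hrT, hrS])
  have hTS'eq : T = S' := Submodule.eq_of_le_of_finrank_eq hTS' (by rw [hrT, hrS'])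
  rw [twistorSphere_eq_span I J K hI hJ hK hIJ hIJK hone,
    twistorSphere_eq_span I' J' K' hI' hJ' hK' hIJ' hIJK' hone]
  rw [← hSdef, ← hS'def, ← hTSeq, ← hTS'eq]
end

section
/- Let I, J, K ∈ End(V) be a quaternionic triple. If X ∈ End(V) commutes with J, Y ∈ End(V) commutes with K, and X + Y commutes with I, then X and Y both commute with I (hence both commute with all of I, J, K). -/
theorem stmt_7 (V : Type*) [AddCommGroup V] [Module ℝ V]
    (I J K : Module.End ℝ V) (hI : I * I = -1) (hJ : J * J = -1) (hK : K * K = -1)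
    (hIJ : I * J = -(J * I)) (hIJK : I * J = K)
    (X Y : Module.End ℝ V) (hX : X * J = J * X) (hY : Y * K = K * Y)
    (hXY : (X + Y) * I = I * (X + Y)) :
    (X * I = I * X ∧ X * K = K * X) ∧ (Y * I = I * Y ∧ Y * J = J * Y) := by
  have hJI : J * I = -(I * J) := by rw [hIJ, neg_neg]
  have hKI : K * I = J := by
    rw [← hIJK, mul_assoc, hJI, mul_neg, ← mul_assoc, hI, neg_mul, one_mul, neg_neg]
  have hIK : I * K = -J := by
    rw [← hIJK, ← mul_assoc, hI, neg_mul, one_mul]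
  have hJK : J * K = I := by
    rw [← hIJK, ← mul_assoc, hJI, neg_mul, mul_assoc, hJ, mul_neg, mul_one, neg_neg]
  have hKJ : K * J = -I := by
    rw [← hIJK, mul_assoc, hJ, mul_neg, mul_one]
  set A := X * I - I * X with hA
  set B := Y * I - I * Y with hB
  have hAB : A + B = 0 := by
    have h : X * I + Y * I = I * X + I * Y := by rw [← add_mul, ← mul_add, hXY]
    rw [hA, hB, sub_add_sub_comm, h, sub_self]
  have hAJ : A * J = -(J * A) := by
    have h1 : X * I * J = -(J * (X * I)) := by
      rw [mul_assoc, hIJ, mul_neg, ← mul_assoc, hX, mul_assoc]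
    have h2 : I * X * J = -(J * (I * X)) := by
      rw [mul_assoc, hX, ← mul_assoc, hIJ, neg_mul, mul_assoc]
    rw [hA, sub_mul, h1, h2, mul_sub, neg_sub]
    abel
  have hBK : B * K = -(K * B) := by
    have h1 : Y * I * K = -(Y * J) := by rw [mul_assoc, hIK, mul_neg]
    have h2 : I * Y * K = -(J * Y) := by
      rw [mul_assoc, hY, ← mul_assoc, hIK, neg_mul]
    have h3 : K * (Y * I) = Y * J := by
      rw [← mul_assoc, ← hY, mul_assoc, hKI]
    have h4 : K * (I * Y) = J * Y := by rw [← mul_assoc, hKI]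
    rw [hB, sub_mul, h1, h2, mul_sub, h3, h4, neg_sub]
    abel
  have hBA : B = -A := eq_neg_of_add_eq_zero_left (by rwa [add_comm] at hAB)
  have hAK : A * K = -(K * A) := by
    have := hBK
    rw [hBA, neg_mul, mul_neg, neg_neg, neg_eq_iff_eq_neg] at this
    exact this
  have hAI : A * I = I * A := by
    rw [← hJK, ← mul_assoc, hAJ, neg_mul, mul_assoc, hAK, mul_neg, neg_neg, ← mul_assoc]
  have hC : I * X * I + X = 0 := by
    have hexp : A * I - I * A = -((I * X * I + X) + (I * X * I + X)) := by
      rw [hA, sub_mul, mul_sub, mul_assoc X I I, hI, mul_neg, mul_one,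
        ← mul_assoc, ← mul_assoc, hI, neg_one_mul]
      abel
    rw [hAI, sub_self] at hexp
    have h2 : (I * X * I + X) + (I * X * I + X) = 0 := by
      rw [← neg_eq_zero, ← hexp]
    have h3 : (2 : ℝ) • (I * X * I + X) = 0 := by rw [two_smul]; exact h2
    have h4 : (I * X * I + X) = (2 : ℝ)⁻¹ • ((2 : ℝ) • (I * X * I + X)) := by
      rw [smul_smul]; norm_num
    rw [h4, h3, smul_zero]
  have hIXI : I * X * I = -X := by
    have := hC
    rwa [add_eq_zero_iff_eq_neg] at this
  have hXI : X * I = I * X := by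
    have h : I * X * I * I = -X * I := by rw [hIXI]
    rw [mul_assoc, hI, mul_neg, mul_one, neg_mul] at h
    exact (neg_inj.mp h).symm
  have hA0 : A = 0 := by rw [hA, hXI, sub_self]
  have hYI : Y * I = I * Y := by
    have : B = 0 := by rw [hBA, hA0, neg_zero]
    rw [hB, sub_eq_zero] at this
    exact this
  refine ⟨⟨hXI, ?_⟩, hYI, ?_⟩
  · rw [← hIJK, ← mul_assoc, hXI, mul_assoc, hX, ← mul_assoc]
  · rw [← hKI, ← mul_assoc, hY, mul_assoc, hYI, ← mul_assoc]
end

section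
/- Let I, J, K ∈ End(V) be a quaternionic triple. Consider the real subspaces of End(V): W_I = {X : XI = IX}, W_J = {X : XJ = JX}, W_K = {X : XK = KX}, and W_ℍ = {X : XI = IX and XJ = JX}. Then W_I ∩ W_J = W_I ∩ W_K = W_J ∩ W_K = W_ℍ, and any element of W_I + W_J + W_K that is the sum X + Y + Z with X ∈ W_I, Y ∈ W_J, Z ∈ W_K equal to zero must have X, Y, Z ∈ W_ℍ. (Transversality of the three centralizers modulo the quaternionic centralizer.) -/
/-! Since `I² = J² = -1`, conjugations `σ` by `I` and `τ` by `J` are involutions whose fixed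
points are the centralizers of `I` and `J`; because `IJ = -JI` they commute, and `στ` is
conjugation by `K = IJ`. So `W_I, W_J, W_K` are the fixed spaces of the three non-trivial elements
of a Klein four-group of additive maps. Any two of `σ, τ, στ` generate the group, which gives the
intersections. If `x + y + z = 0` with `x, y, z` fixed by `σ, τ, στ` respectively, then `σ` and
`τ` agree on `z`, and computing `στ y` and `τσ y` shows `2 (z - τ z) = 0`. -/

open Function

namespace AddMonoid.End

variable {M : Type*} [AddCommGroup M] {σ τ : AddMonoid.End M}

theorem fixedPoints_inter_fixedPoints_mul (hσ : σ * σ = 1) :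
    fixedPoints σ ∩ fixedPoints ⇑(σ * τ) = fixedPoints σ ∩ fixedPoints τ := by
  ext x
  refine and_congr_right fun (hx : σ x = x) =>
    ⟨fun (h : σ (τ x) = x) => ?_, fun (h : τ x = x) => ?_⟩
  · calc τ x = (σ * σ * τ) x := by rw [hσ, one_mul]
      _ = x := by simp only [coe_mul, comp_apply, h, hx]
  · simp only [mem_fixedPoints, IsFixedPt, coe_mul, comp_apply, h, hx]

theorem apply_eq_self_of_add_add_eq_zero [IsAddTorsionFree M] (hσ : σ * σ = 1)
    (hτ : τ * τ = 1) (hστ : Commute σ τ) {x y z : M} (hx : σ x = x) (hy : τ y = y)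
    (hz : (σ * τ) z = z) (hxyz : x + y + z = 0) : τ x = x := by
  have hσz : σ z = τ z := by
    calc σ z = (σ * σ * τ) z := by rw [mul_assoc, coe_mul, comp_apply, hz]
      _ = τ z := by rw [hσ, one_mul]
  have hτz : τ (τ z) = z := by rw [← comp_apply (f := τ), ← coe_mul, hτ, coe_one, id]
  set d := z - τ z
  have hσy : σ y = y + d := by
    rw [eq_neg_of_add_eq_zero_left (a := y) (b := x + z) (by rw [← hxyz]; abel)]
    simp only [map_neg, map_add, hx, hσz, d]
    abel
  have hτσy : τ (σ y) = y - d := by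
    simp only [hσy, map_add, map_sub, hy, hτz, d]
    abel
  have hd : d = 0 := by
    have hcomm := congr($hστ.eq y)
    simp only [coe_mul, comp_apply] at hcomm
    rw [hy, hτσy, hσy, sub_eq_add_neg] at hcomm
    rw [← nsmul_eq_zero_iff_right two_ne_zero, two_nsmul]
    exact add_eq_zero_iff_eq_neg.mpr (add_left_cancel hcomm)
  rw [sub_eq_zero] at hd
  rw [eq_neg_of_add_eq_zero_left (a := x) (b := y + z) (by rw [← hxyz]; abel), map_neg, map_add,
    hy, ← hd]

theorem mem_fixedPoints_inter_of_add_add_eq_zero [IsAddTorsionFree M] (hσ : σ * σ = 1)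
    (hτ : τ * τ = 1) (hστ : Commute σ τ) {x y z : M} (hx : σ x = x) (hy : τ y = y)
    (hz : (σ * τ) z = z) (hxyz : x + y + z = 0) :
    x ∈ fixedPoints σ ∩ fixedPoints τ ∧ y ∈ fixedPoints σ ∩ fixedPoints τ ∧
      z ∈ fixedPoints σ ∩ fixedPoints τ := by
  have hτx := apply_eq_self_of_add_add_eq_zero hσ hτ hστ hx hy hz hxyz
  have hσy := apply_eq_self_of_add_add_eq_zero hτ hσ hστ.symm hy hx (hστ.eq ▸ hz)
    (by rwa [add_comm y x])
  have hz' : z = -(x + y) := eq_neg_of_add_eq_zero_right hxyz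
  refine ⟨⟨hx, hτx⟩, ⟨hσy, hy⟩, ?_, ?_⟩ <;>
    simp only [mem_fixedPoints, IsFixedPt, hz', map_neg, map_add, hx, hy, hτx, hσy]

end AddMonoid.End

section UnitsConj

variable {R : Type*} [Ring R]

def unitsConj : Rˣ →* AddMonoid.End R :=
  (DistribMulAction.toAddMonoidEnd (ConjAct Rˣ) R).comp ConjAct.toConjAct.toMonoidHom

theorem unitsConj_apply (u : Rˣ) (x : R) : unitsConj u x = u * x * ↑u⁻¹ := rfl

theorem fixedPoints_unitsConj (u : Rˣ) : fixedPoints (unitsConj u) = {x : R | x * u = u * x} := by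
  ext x
  rw [mem_fixedPoints, IsFixedPt, unitsConj_apply, Units.mul_inv_eq_iff_eq_mul, eq_comm]
  rfl

theorem unitsConj_neg (u : Rˣ) : unitsConj (-u) = unitsConj u := by
  ext x
  simp [unitsConj_apply]

theorem unitsConj_mul_self {u : Rˣ} (hu : u * u = -1) : unitsConj u * unitsConj u = 1 := by
  rw [← map_mul, hu, unitsConj_neg, map_one]

theorem commute_unitsConj {u v : Rˣ} (huv : u * v = -(v * u)) :
    Commute (unitsConj u) (unitsConj v) := by
  rw [Commute, SemiconjBy, ← map_mul, ← map_mul, huv, unitsConj_neg]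

def unitOfMulSelfEqNegOne {a : R} (ha : a * a = -1) : Rˣ :=
  ⟨a, -a, by rw [mul_neg, ha, neg_neg], by rw [neg_mul, ha, neg_neg]⟩

end UnitsConj

theorem stmt_8_general (V : Type*) [AddCommGroup V] [Module ℝ V]
    (I J K : Module.End ℝ V) (hI : I * I = -1) (hJ : J * J = -1)
    (hIJ : I * J = -(J * I)) (hIJK : I * J = K)
    (WI WJ WK WH : Set (Module.End ℝ V))
    (hWI : WI = {X | X * I = I * X}) (hWJ : WJ = {X | X * J = J * X})
    (hWK : WK = {X | X * K = K * X})
    (hWH : WH = {X | X * I = I * X ∧ X * J = J * X}) :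
    WI ∩ WJ = WH ∧ WI ∩ WK = WH ∧ WJ ∩ WK = WH ∧
      ∀ X Y Z : Module.End ℝ V, X ∈ WI → Y ∈ WJ → Z ∈ WK → X + Y + Z = 0 →
        X ∈ WH ∧ Y ∈ WH ∧ Z ∈ WH := by
  have : IsAddTorsionFree (Module.End ℝ V) := .of_isTorsionFree ℝ _
  set i := unitOfMulSelfEqNegOne hI
  set j := unitOfMulSelfEqNegOne hJ
  have hσ := unitsConj_mul_self (Units.ext hI : i * i = -1)
  have hτ := unitsConj_mul_self (Units.ext hJ : j * j = -1)
  have hστ := commute_unitsConj (Units.ext hIJ : i * j = -(j * i))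
  have hWI' : WI = fixedPoints (unitsConj i) := hWI.trans (fixedPoints_unitsConj i).symm
  have hWJ' : WJ = fixedPoints (unitsConj j) := hWJ.trans (fixedPoints_unitsConj j).symm
  have hWK' : WK = fixedPoints ⇑(unitsConj i * unitsConj j) := by
    rw [hWK, ← map_mul, fixedPoints_unitsConj, ← hIJK]
    rfl
  have hWH' : WH = WI ∩ WJ := by rw [hWH, hWI, hWJ, Set.ofPred_and]
  subst hWH'
  rw [hWI', hWJ', hWK']
  refine ⟨rfl, AddMonoid.End.fixedPoints_inter_fixedPoints_mul hσ, ?_,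
    fun X Y Z => AddMonoid.End.mem_fixedPoints_inter_of_add_add_eq_zero hσ hτ hστ⟩
  rw [hστ.eq, AddMonoid.End.fixedPoints_inter_fixedPoints_mul hτ, Set.inter_comm]

theorem stmt_8 (V : Type*) [AddCommGroup V] [Module ℝ V]
    (I J K : Module.End ℝ V) (hI : I * I = -1) (hJ : J * J = -1) (hK : K * K = -1)
    (hIJ : I * J = -(J * I)) (hIJK : I * J = K)
    (WI WJ WK WH : Set (Module.End ℝ V))
    (hWI : WI = {X | X * I = I * X}) (hWJ : WJ = {X | X * J = J * X})
    (hWK : WK = {X | X * K = K * X})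
    (hWH : WH = {X | X * I = I * X ∧ X * J = J * X}) :
    WI ∩ WJ = WH ∧ WI ∩ WK = WH ∧ WJ ∩ WK = WH ∧
      ∀ X Y Z : Module.End ℝ V, X ∈ WI → Y ∈ WJ → Z ∈ WK → X + Y + Z = 0 →
        X ∈ WH ∧ Y ∈ WH ∧ Z ∈ WH :=
  stmt_8_general V I J K hI hJ hIJ hIJK WI WJ WK WH hWI hWJ hWK hWH
end

section
/- For u, v ∈ ℂ with u² + v² = -1, let b, c, d ∈ ℝ and consider the Hermitian 2×2 matrix H = i·Ω·Q·Ω̄ᵀ where Ω = [[1, 0, u, v], [0, 1, v, -u]] and Q is the skew-symmetric 4×4 matrix with rows (0,-b,c,-d), (b,0,d,c), (-c,-d,0,b), (d,-c,-b,0). Then det H = b²(4(u₁v₂-u₂v₁)² - (1+|u|²+|v|²)²) - 4(u₂c - v₂d)² - 4(v₂c + u₂d)² ≤ 0 for all b, c, d, with strict inequality unless b = 0 and u₂c = v₂d and v₂c = -u₂d. In particular, H is never positive definite. -/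
/-!
Write `u = u₁ + i u₂`, `v = v₁ + i v₂`. The relation `u² + v² = -1` says
`u₁² + v₁² + 1 = u₂² + v₂²` and `u₁u₂ + v₁v₂ = 0`. With `A = u₁² + v₁²`, `B = u₂² + v₂²`,
Lagrange's identity gives `(u₁v₂ - u₂v₁)² = AB - (u₁u₂ + v₁v₂)² = AB` and
`1 + |u|² + |v|² = 1 + A + B = 2B`, so the coefficient of `b²` in `det H` is
`4AB - 4B² = -4B ≤ -4`. Hence `det H` is minus a sum of squares, vanishing only in the stated
case, and a positive definite matrix would have positive determinant.
-/

open Matrix ComplexOrder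

namespace TwistorLine

variable {u v : ℂ}

lemma re_sq_add_re_sq_add_one (huv : u ^ 2 + v ^ 2 = -1) :
    u.re ^ 2 + v.re ^ 2 + 1 = u.im ^ 2 + v.im ^ 2 := by
  have h := congrArg Complex.re huv
  simp only [pow_two, Complex.add_re, Complex.mul_re, Complex.neg_re, Complex.one_re] at h
  linarith

lemma re_mul_im_add_re_mul_im (huv : u ^ 2 + v ^ 2 = -1) :
    u.re * u.im + v.re * v.im = 0 := by
  have h := congrArg Complex.im huv
  simp only [pow_two, Complex.add_im, Complex.mul_im, Complex.neg_im, Complex.one_im] at h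
  linarith

lemma one_le_im_sq_add_im_sq (huv : u ^ 2 + v ^ 2 = -1) : 1 ≤ u.im ^ 2 + v.im ^ 2 := by
  nlinarith [re_sq_add_re_sq_add_one huv, sq_nonneg u.re, sq_nonneg v.re]

lemma sq_coeff_eq (huv : u ^ 2 + v ^ 2 = -1) :
    4 * (u.re * v.im - u.im * v.re) ^ 2 - (1 + ‖u‖ ^ 2 + ‖v‖ ^ 2) ^ 2 =
      -4 * (u.im ^ 2 + v.im ^ 2) := by
  have hre := re_sq_add_re_sq_add_one huv
  have him := re_mul_im_add_re_mul_im huv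
  rw [Complex.sq_norm, Complex.sq_norm, Complex.normSq_apply, Complex.normSq_apply]
  linear_combination
    -(u.re ^ 2 + v.re ^ 2 + 1 - u.im ^ 2 - v.im ^ 2) * hre - 4 * (u.re * u.im + v.re * v.im) * him

noncomputable def detH (u v : ℂ) (b c d : ℝ) : ℝ :=
  b ^ 2 * (4 * (u.re * v.im - u.im * v.re) ^ 2 - (1 + ‖u‖ ^ 2 + ‖v‖ ^ 2) ^ 2) -
    4 * (u.im * c - v.im * d) ^ 2 - 4 * (v.im * c + u.im * d) ^ 2

lemma det_eq_detH (b c d : ℝ) :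
    (Complex.I • (!![1, 0, u, v; 0, 1, v, -u] *
      !![0, -(b : ℂ), c, -(d : ℂ); b, 0, d, c; -(c : ℂ), -(d : ℂ), 0, b; d, -(c : ℂ), -(b : ℂ), 0] *
      (!![1, 0, u, v; 0, 1, v, -u] : Matrix (Fin 2) (Fin 4) ℂ)ᴴ)).det = (detH u v b c d : ℂ) := by
  simp only [det_fin_two, Matrix.smul_apply, mul_apply, Fin.sum_univ_four, conjTranspose_apply]
  rw [Complex.ext_iff, Complex.ofReal_re, Complex.ofReal_im, detH, Complex.sq_norm,
    Complex.sq_norm, Complex.normSq_apply, Complex.normSq_apply]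
  constructor <;> simp [Complex.mul_re, Complex.mul_im] <;> ring

lemma detH_eq (huv : u ^ 2 + v ^ 2 = -1) (b c d : ℝ) :
    detH u v b c d = -4 * (u.im ^ 2 + v.im ^ 2) * b ^ 2 - 4 * (u.im * c - v.im * d) ^ 2 -
      4 * (v.im * c + u.im * d) ^ 2 := by
  rw [detH, sq_coeff_eq huv]
  ring

lemma detH_nonpos (huv : u ^ 2 + v ^ 2 = -1) (b c d : ℝ) : detH u v b c d ≤ 0 := by
  rw [detH_eq huv]
  nlinarith [one_le_im_sq_add_im_sq huv, sq_nonneg b, sq_nonneg (u.im * c - v.im * d),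
    sq_nonneg (v.im * c + u.im * d)]

lemma detH_neg (huv : u ^ 2 + v ^ 2 = -1) {b c d : ℝ}
    (h : ¬(b = 0 ∧ u.im * c = v.im * d ∧ v.im * c = -(u.im * d))) : detH u v b c d < 0 := by
  rw [detH_eq huv]
  have hB := one_le_im_sq_add_im_sq huv
  have hx := sq_nonneg (u.im * c - v.im * d)
  have hy := sq_nonneg (v.im * c + u.im * d)
  have hb := sq_nonneg b
  have hne : b ≠ 0 ∨ u.im * c - v.im * d ≠ 0 ∨ v.im * c + u.im * d ≠ 0 := by
    by_contra! h0
    exact h ⟨h0.1, sub_eq_zero.mp h0.2.1, eq_neg_of_add_eq_zero_left h0.2.2⟩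
  rcases hne with hne | hne | hne <;> nlinarith [sq_pos_of_ne_zero hne]

end TwistorLine

open TwistorLine in
theorem stmt_14 (u v : ℂ) (huv : u ^ 2 + v ^ 2 = -1) (b c d : ℝ)
    (Ω : Matrix (Fin 2) (Fin 4) ℂ)
    (hΩ : Ω = !![1, 0, u, v; 0, 1, v, -u])
    (Q : Matrix (Fin 4) (Fin 4) ℂ)
    (hQ : Q = !![0, -(b : ℂ), c, -(d : ℂ); b, 0, d, c; -(c : ℂ), -(d : ℂ), 0, b;
      d, -(c : ℂ), -(b : ℂ), 0])
    (H : Matrix (Fin 2) (Fin 2) ℂ) (hH : H = Complex.I • (Ω * Q * Ωᴴ)) :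
    H.det = ((b ^ 2 * (4 * (u.re * v.im - u.im * v.re) ^ 2 -
          (1 + ‖u‖ ^ 2 + ‖v‖ ^ 2) ^ 2) -
        4 * (u.im * c - v.im * d) ^ 2 - 4 * (v.im * c + u.im * d) ^ 2 : ℝ) : ℂ) ∧
      (b ^ 2 * (4 * (u.re * v.im - u.im * v.re) ^ 2 -
          (1 + ‖u‖ ^ 2 + ‖v‖ ^ 2) ^ 2) -
        4 * (u.im * c - v.im * d) ^ 2 - 4 * (v.im * c + u.im * d) ^ 2 : ℝ) ≤ 0 ∧
      (¬(b = 0 ∧ u.im * c = v.im * d ∧ v.im * c = -(u.im * d)) →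
        (b ^ 2 * (4 * (u.re * v.im - u.im * v.re) ^ 2 -
            (1 + ‖u‖ ^ 2 + ‖v‖ ^ 2) ^ 2) -
          4 * (u.im * c - v.im * d) ^ 2 - 4 * (v.im * c + u.im * d) ^ 2 : ℝ) < 0) ∧
      ¬ H.PosDef := by
  have hdet : H.det = (detH u v b c d : ℂ) := by
    subst hH hΩ hQ
    exact det_eq_detH b c d
  refine ⟨hdet, detH_nonpos huv b c d, detH_neg huv, fun hH_pos => ?_⟩
  have hpos := hH_pos.det_pos
  rw [hdet] at hpos
  exact (detH_nonpos huv b c d).not_gt (by exact_mod_cast hpos)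
end

section
/- Let I, J, K ∈ End(V) be a quaternionic triple, with V a finite-dimensional real vector space on which Id, I, J, K are linearly independent, and let W_ℍ denote the joint centralizer of I and J in End(V). Suppose X, Y, Z ∈ End(V) satisfy XJ = JX, YK = KY, ZI = IZ and X + Y + Z ∈ W_ℍ. Then X, Y, Z ∈ W_ℍ. -/
theorem stmt_18 (V : Type*) [AddCommGroup V] [Module ℝ V] [FiniteDimensional ℝ V]
    (I J K : Module.End ℝ V) (hI : I * I = -1) (hJ : J * J = -1) (hK : K * K = -1)
    (hIJ : I * J = -(J * I)) (hIJK : I * J = K)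
    (hindep : LinearIndependent ℝ ![(1 : Module.End ℝ V), I, J, K])
    (X Y Z : Module.End ℝ V)
    (hX : X * J = J * X) (hY : Y * K = K * Y) (hZ : Z * I = I * Z)
    (hsum : (X + Y + Z) * I = I * (X + Y + Z) ∧ (X + Y + Z) * J = J * (X + Y + Z)) :
    (X * I = I * X ∧ X * J = J * X) ∧ (Y * I = I * Y ∧ Y * J = J * Y) ∧
      (Z * I = I * Z ∧ Z * J = J * Z) := by
  obtain ⟨hs1, hs2⟩ := hsum
  have hIJ0 : I * J + J * I = 0 := by
    linear_combination (norm := noncomm_ring) hIJ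
  -- commutators of Y with I and J, written via A := X*I - I*X and B := Z*J - J*Z
  have hYI : Y * I - I * Y = -(X * I - I * X) := by
    linear_combination (norm := noncomm_ring) hs1 - hZ
  have hYJ : Y * J - J * Y = -(Z * J - J * Z) := by
    linear_combination (norm := noncomm_ring) hs2 - hX
  have hYK : Y * (I * J) = (I * J) * Y := by rw [hIJK]; exact hY
  -- main relation: I*B + A*J = 0
  have hIBAJ : I * (Z * J - J * Z) + (X * I - I * X) * J = 0 := by
    linear_combination (norm := noncomm_ring) hYI * J + I * hYJ - hYK
  -- anticommutation relations
  have hAI : (X * I - I * X) * I + I * (X * I - I * X) = 0 := by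
    linear_combination (norm := noncomm_ring) X * hI - hI * X
  have hBI : (Z * J - J * Z) * I + I * (Z * J - J * Z) = 0 := by
    linear_combination (norm := noncomm_ring) Z * hIJ0 - hIJ0 * Z - J * hZ - hZ * J
  have h1 := congrArg (fun w => I * w) hIBAJ
  have h2 := congrArg (fun w => w * I) hIBAJ
  simp only [mul_add, add_mul, mul_zero, zero_mul] at h1 h2
  have e1 : -(Z * J - J * Z) + I * (X * I - I * X) * J = 0 := by
    linear_combination (norm := noncomm_ring) h1 - hI * (Z * J - J * Z)
  have e2 : (Z * J - J * Z) + (Z * J - J * Z) = 0 := by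
    linear_combination (norm := noncomm_ring)
      h2 - hBI * I + (Z * J - J * Z) * hI - (X * I - I * X) * hIJ0 + hAI * J - e1
  have e2' : (2 : ℝ) • (Z * J - J * Z) = 0 := by rw [two_smul]; exact e2
  have hB0 : Z * J - J * Z = 0 := by
    have h := congrArg (fun w => ((2 : ℝ)⁻¹) • w) e2'
    simpa [smul_smul] using h
  have hAJ : (X * I - I * X) * J = 0 := by
    linear_combination (norm := noncomm_ring) hIBAJ - I * hB0
  have hA0 : X * I - I * X = 0 := by
    linear_combination (norm := noncomm_ring) (X * I - I * X) * hJ - hAJ * J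
  refine ⟨⟨?_, hX⟩, ⟨?_, ?_⟩, hZ, ?_⟩
  · linear_combination (norm := noncomm_ring) hA0
  · linear_combination (norm := noncomm_ring) hYI - hA0
  · linear_combination (norm := noncomm_ring) hYJ - hB0
  · linear_combination (norm := noncomm_ring) hB0
end
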